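/- arXiv:2011.14368 — 6 statements merged into one kernel-verified Lean document; each statement's English description precedes it below -/
import Mathlib

section
/- Let W be a real inner product space, let p ≥ 1, and let f : W → M_p(ℝ) be a linear map into the real p×p matrices such that f(w) is an orthogonal matrix for every unit vector w ∈ W. Then for all u, v ∈ W one has f(u)ᵀ·f(v) + f(v)ᵀ·f(u) = ((2/p)·tr(f(u)ᵀ·f(v)))·I, where I is the p×p identity matrix. -/
open Matrix

/-!
Since `f` is linear, `w ↦ f(w)ᵀ f(w)` is a quadratic form with values in `M_p(ℝ)`; being `I` on the
unit sphere, it equals `‖w‖² • I` everywhere. Polarizing gives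
`f(u)ᵀ f(v) + f(v)ᵀ f(u) = 2⟪u, v⟫ • I`, and a scalar matrix `c • I` is recovered from its trace as
`(tr / p) • I`.
-/

namespace Matrix

variable {n : Type*} [Fintype n] [DecidableEq n]

theorem eq_trace_div_card_smul_one_of_eq_smul_one {K : Type*} [Field K] [CharZero K]
    {A : Matrix n n K} {c : K} (h : A = c • 1) : A = (A.trace / Fintype.card n) • 1 := by
  subst h
  rcases isEmpty_or_nonempty n with _ | _
  · exact Subsingleton.elim _ _
  · rw [trace_smul, trace_one, smul_eq_mul,
      mul_div_cancel_right₀ _ (Nat.cast_ne_zero.mpr Fintype.card_ne_zero)]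

omit [DecidableEq n] in
theorem trace_transpose_mul_comm {R : Type*} [CommSemiring R] (A B : Matrix n n R) :
    trace (Bᵀ * A) = trace (Aᵀ * B) := by
  rw [← trace_transpose, transpose_mul, transpose_transpose]

end Matrix

section OrthogonalOnSphere

variable {W n : Type*} [NormedAddCommGroup W] [InnerProductSpace ℝ W] [Fintype n] [DecidableEq n]
  {f : W →ₗ[ℝ] Matrix n n ℝ}

theorem transpose_mul_self_eq_norm_sq_smul_one (horth : ∀ w : W, ‖w‖ = 1 → (f w)ᵀ * f w = 1)
    (w : W) : (f w)ᵀ * f w = ‖w‖ ^ 2 • 1 := by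
  rcases eq_or_ne w 0 with rfl | hw
  · simp
  · have hnorm : ‖w‖ ≠ 0 := norm_ne_zero_iff.mpr hw
    have hunit : ‖‖w‖⁻¹ • w‖ = 1 := by
      rw [norm_smul, norm_inv, norm_norm, inv_mul_cancel₀ hnorm]
    calc (f w)ᵀ * f w = (f (‖w‖ • ‖w‖⁻¹ • w))ᵀ * f (‖w‖ • ‖w‖⁻¹ • w) := by
          rw [smul_smul, mul_inv_cancel₀ hnorm, one_smul]
      _ = ‖w‖ ^ 2 • 1 := by
          rw [map_smul, transpose_smul, smul_mul_smul_comm, horth _ hunit, sq]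

theorem transpose_mul_add_transpose_mul_eq_inner_smul_one
    (horth : ∀ w : W, ‖w‖ = 1 → (f w)ᵀ * f w = 1) (u v : W) :
    (f u)ᵀ * f v + (f v)ᵀ * f u = (2 * inner ℝ u v) • 1 := by
  have hsum := transpose_mul_self_eq_norm_sq_smul_one horth (u + v)
  rw [map_add, transpose_add, add_mul, mul_add, mul_add,
    transpose_mul_self_eq_norm_sq_smul_one horth u,
    transpose_mul_self_eq_norm_sq_smul_one horth v, norm_add_sq_real, add_smul, add_smul] at hsum
  rw [← sub_eq_zero] at hsum ⊢
  rw [← hsum]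
  abel

end OrthogonalOnSphere

theorem hopf_polarization_identity_general
    {W : Type*} [NormedAddCommGroup W] [InnerProductSpace ℝ W]
    (p : ℕ) (f : W →ₗ[ℝ] Matrix (Fin p) (Fin p) ℝ)
    (horth : ∀ w : W, ‖w‖ = 1 → (f w)ᵀ * f w = 1) (u v : W) :
    (f u)ᵀ * f v + (f v)ᵀ * f u
      = ((2 / (p : ℝ)) * Matrix.trace ((f u)ᵀ * f v)) • (1 : Matrix (Fin p) (Fin p) ℝ) := by
  have hscalar := transpose_mul_add_transpose_mul_eq_inner_smul_one horth u v
  rw [eq_trace_div_card_smul_one_of_eq_smul_one hscalar, trace_add, trace_transpose_mul_comm,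
    Fintype.card_fin]
  ring_nf

/-- Let `W` be a real inner product space, `p ≥ 1`, and
`f : W → M_p(ℝ)` a linear map such that `f w` is an orthogonal matrix for every
unit vector `w`.  Then for all `u v : W`,
`f(u)ᵀ f(v) + f(v)ᵀ f(u) = ((2/p)·tr(f(u)ᵀ f(v)))·I`. -/
theorem hopf_polarization_identity
    {W : Type*} [NormedAddCommGroup W] [InnerProductSpace ℝ W]
    (p : ℕ) (hp : 1 ≤ p) (f : W →ₗ[ℝ] Matrix (Fin p) (Fin p) ℝ)
    (horth : ∀ w : W, ‖w‖ = 1 → (f w)ᵀ * f w = 1) (u v : W) :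
    (f u)ᵀ * f v + (f v)ᵀ * f u
      = ((2 / (p : ℝ)) * Matrix.trace ((f u)ᵀ * f v)) • (1 : Matrix (Fin p) (Fin p) ℝ) :=
  hopf_polarization_identity_general p f horth u v
end

section
/- Let W be a real inner product space, p ≥ 1, and f : W → M_p(ℝ) a linear map such that: (a) f(w) is an orthogonal matrix for every unit vector w ∈ W; (b) tr(f(u)ᵀ·f(v)) = p·⟨u,v⟩ for all u, v ∈ W; and (c) f(w₀) = I for some unit vector w₀ ∈ W. Then for all u, v ∈ W orthogonal to w₀: f(u)ᵀ = −f(u), and f(u)·f(v) + f(v)·f(u) = −2·⟨u,v⟩·I. In particular, for every unit vector u orthogonal to w₀ the matrix f(u) is an orthogonal matrix with f(u)·f(u) = −I, so f restricted to the orthogonal complement of w₀ defines an orthogonal Clifford representation. -/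
open Matrix
open scoped RealInnerProductSpace

/-- (Paper's Proposition 2.2.)  An isometric linear map
`f : W → M_p(ℝ)` sending unit vectors into the orthogonal group and a unit
vector `w₀` to the identity restricts, on the orthogonal complement of `w₀`,
to an orthogonal Clifford representation. -/
theorem isometric_sphere_into_orthogonal_is_clifford
    {W : Type*} [NormedAddCommGroup W] [InnerProductSpace ℝ W]
    (p : ℕ) (hp : 1 ≤ p) (f : W →ₗ[ℝ] Matrix (Fin p) (Fin p) ℝ)
    (horth : ∀ w : W, ‖w‖ = 1 → (f w)ᵀ * f w = 1)
    (hiso : ∀ u v : W, Matrix.trace ((f u)ᵀ * f v) = (p : ℝ) * ⟪u, v⟫)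
    (w₀ : W) (hw₀ : ‖w₀‖ = 1) (hfw₀ : f w₀ = 1) :
    (∀ u v : W, ⟪u, w₀⟫ = 0 → ⟪v, w₀⟫ = 0 →
      (f u)ᵀ = -f u ∧
      f u * f v + f v * f u
        = (-(2 * ⟪u, v⟫)) • (1 : Matrix (Fin p) (Fin p) ℝ)) ∧
    (∀ u : W, ‖u‖ = 1 → ⟪u, w₀⟫ = 0 →
      (f u)ᵀ * f u = 1 ∧ f u * f u = -1) := by
  -- Step 1: for every `u`, `(f u)ᵀ * f u = ‖u‖² • 1`.
  have hA : ∀ u : W, (f u)ᵀ * f u = (‖u‖ ^ 2 : ℝ) • (1 : Matrix (Fin p) (Fin p) ℝ) := by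
    intro u
    rcases eq_or_ne u 0 with rfl | hu
    · simp
    · have hn : ‖u‖ ≠ 0 := norm_ne_zero_iff.mpr hu
      have h1 : ‖(‖u‖⁻¹ : ℝ) • u‖ = 1 := by
        rw [norm_smul, norm_inv, norm_norm, inv_mul_cancel₀ hn]
      have h2 := horth _ h1
      rw [_root_.map_smul, transpose_smul, Matrix.smul_mul, Matrix.mul_smul, smul_smul] at h2
      have h3 := congrArg (fun M => (‖u‖ ^ 2 : ℝ) • M) h2
      simp only [smul_smul] at h3
      have h4 : (‖u‖ ^ 2 : ℝ) * (‖u‖⁻¹ * ‖u‖⁻¹) = 1 := by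
        rw [pow_two]; field_simp
      rw [h4, one_smul] at h3
      simpa using h3
  -- Step 2: antisymmetry on the orthogonal complement of `w₀`.
  have hanti : ∀ u : W, ⟪u, w₀⟫ = 0 → (f u)ᵀ = -f u := by
    intro u hu
    have hwu : ⟪w₀, u⟫ = 0 := by rw [real_inner_comm]; exact hu
    have hnorm : ‖w₀ + u‖ ^ 2 = 1 + ‖u‖ ^ 2 := by
      rw [norm_add_sq_real, hwu, hw₀]; ring
    have h1 := hA (w₀ + u)
    have expand : (f (w₀ + u))ᵀ * f (w₀ + u)
        = 1 + f u + (f u)ᵀ + (f u)ᵀ * f u := by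
      rw [map_add, hfw₀, transpose_add, transpose_one]
      noncomm_ring
    rw [expand, hA u, hnorm] at h1
    have h5 : (f u)ᵀ = ((1 : ℝ) + ‖u‖ ^ 2) • (1 : Matrix (Fin p) (Fin p) ℝ)
        - 1 - f u - (‖u‖ ^ 2 : ℝ) • 1 := by
      rw [← h1]; abel
    rw [h5, add_smul, one_smul]; abel
  -- Step 3: anticommutation relation.
  have hac : ∀ u v : W, ⟪u, w₀⟫ = 0 → ⟪v, w₀⟫ = 0 →
      f u * f v + f v * f u = (-(2 * ⟪u, v⟫)) • (1 : Matrix (Fin p) (Fin p) ℝ) := by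
    intro u v hu hv
    have hn : ‖u + v‖ ^ 2 = ‖u‖ ^ 2 + 2 * ⟪u, v⟫ + ‖v‖ ^ 2 := norm_add_sq_real u v
    have h1 := hA (u + v)
    have expand : (f (u + v))ᵀ * f (u + v)
        = (f u)ᵀ * f u + ((f u)ᵀ * f v + (f v)ᵀ * f u) + (f v)ᵀ * f v := by
      rw [map_add, transpose_add]; noncomm_ring
    rw [expand, hA u, hA v, hanti u hu, hanti v hv, hn] at h1
    have h6 : (-f u) * f v + (-f v) * f u
        = (‖u‖ ^ 2 + 2 * ⟪u, v⟫ + ‖v‖ ^ 2 : ℝ) • (1 : Matrix (Fin p) (Fin p) ℝ)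
          - (‖u‖ ^ 2 : ℝ) • 1 - (‖v‖ ^ 2 : ℝ) • 1 := by
      rw [← h1]; abel
    have h5 : f u * f v + f v * f u = -((-f u) * f v + (-f v) * f u) := by
      noncomm_ring
    rw [h5, h6, add_smul, add_smul]
    module
  refine ⟨fun u v hu hv => ⟨hanti u hu, hac u v hu hv⟩, fun u hu1 hu2 => ⟨horth u hu1, ?_⟩⟩
  have h1 : -(f u * f u) = 1 := by
    rw [← neg_mul, ← hanti u hu2]; exact horth u hu1
  exact neg_eq_iff_eq_neg.mp h1
end

section
/- Let p ≥ 1, j ≥ 1, let J_1,…,J_j be a Clifford family on ℝ^p, and let A be an arbitrary real p×p matrix. Then the following are equivalent: (i) for every t ∈ ℝ the matrix exp(tA)·J_j satisfies (exp(tA)·J_j)² = −I and anticommutes with J_i for every i < j; (ii) A·J_j = −J_j·A, and A·J_i = J_i·A for every i < j. Here exp denotes the matrix exponential. -/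
/-!
Because `J_j * J_j = -1`, right multiplication by `J_j` is invertible, so `(exp(tA) J_j)² = -1`
says `exp(tA) J_j exp(tA) = J_j`, and anticommutation of `exp(tA) J_j` with `J_i` says that
`exp(tA)` commutes with `J_i`. Differentiating these identities at `t = 0` gives
`A J_j + J_j A = 0` and `A J_i = J_i A`. Conversely, `J_j A = (-A) J_j` integrates to
`J_j exp(tA) = exp(-tA) J_j`, and `A J_i = J_i A` to `exp(tA) J_i = J_i exp(tA)`.
-/

open Matrix NormedSpace

section Ring

variable {R : Type*} [Ring R]

theorem isUnit_of_mul_self_eq_neg_one {J : R} (hJ : J * J = -1) : IsUnit J :=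
  ⟨⟨J, -J, by rw [mul_neg, hJ, neg_neg], by rw [neg_mul, hJ, neg_neg]⟩, rfl⟩

theorem mul_mul_self_eq_neg_one_iff {J : R} (hJ : J * J = -1) (X : R) :
    X * J * (X * J) = -1 ↔ X * J * X = J := by
  rw [← mul_assoc, ← hJ]
  exact (isUnit_of_mul_self_eq_neg_one hJ).mul_left_inj

theorem mul_mul_eq_neg_mul_mul_iff_commute {J K : R} (hJ : IsUnit J) (hJK : J * K = -(K * J))
    (X : R) : X * J * K = -(K * (X * J)) ↔ Commute X K := by
  rw [mul_assoc, hJK, mul_neg, neg_inj, ← mul_assoc, ← mul_assoc, hJ.mul_left_inj,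
    commute_iff_eq]

end Ring

section ExpCurve

variable {𝔸 : Type*} [NormedRing 𝔸] [NormedAlgebra ℝ 𝔸] [CompleteSpace 𝔸]

theorem hasDerivAt_exp_smul_const_zero (A : 𝔸) :
    HasDerivAt (fun t : ℝ => exp (t • A)) A 0 := by
  simpa using hasDerivAt_exp_smul_const (𝕂 := ℝ) A 0

theorem forall_exp_smul_commute_iff {A B : 𝔸} :
    (∀ t : ℝ, Commute (exp (t • A)) B) ↔ Commute A B := by
  refine ⟨fun h => ?_, fun h t => (h.smul_left t).exp_left⟩
  have hexp := hasDerivAt_exp_smul_const_zero A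
  exact (hexp.mul_const B).unique
    ((hexp.const_mul B).congr_of_eventuallyEq (.of_forall fun t => (h t).eq))

theorem forall_exp_smul_mul_mul_exp_smul_eq_iff {A B : 𝔸} :
    (∀ t : ℝ, exp (t • A) * B * exp (t • A) = B) ↔ A * B = -(B * A) := by
  constructor
  · intro h
    have hexp := hasDerivAt_exp_smul_const_zero A
    have hderiv : HasDerivAt (fun t : ℝ => exp (t • A) * B * exp (t • A)) (A * B + B * A) 0 := by
      have := (hexp.mul_const B).mul hexp
      simp only [zero_smul, exp_zero, mul_one, one_mul] at this
      exact this
    have hsum : A * B + B * A = 0 :=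
      hderiv.unique ((hasDerivAt_const (0 : ℝ) B).congr_of_eventuallyEq (.of_forall h))
    exact eq_neg_of_add_eq_zero_left hsum
  · intro h t
    let : NormedAlgebra ℚ 𝔸 := NormedAlgebra.restrictScalars ℚ ℝ 𝔸
    have hsemi : SemiconjBy B (t • A) (-(t • A)) := by
      rw [SemiconjBy, mul_smul_comm, neg_mul, smul_mul_assoc, h, smul_neg, neg_neg]
    simpa using hsemi.exp_neg_mul_mul_exp_eq_self

end ExpCurve

theorem exp_curve_in_centriole_iff_general (p k : ℕ)
    (J : Fin (k + 1) → Matrix (Fin p) (Fin p) ℝ)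
    (hcs : ∀ i, J i * J i = -1)
    (hanti : ∀ i j, i ≠ j → J i * J j = -(J j * J i))
    (A : Matrix (Fin p) (Fin p) ℝ) :
    ((∀ t : ℝ,
        (NormedSpace.exp (t • A) * J (Fin.last k)) *
          (NormedSpace.exp (t • A) * J (Fin.last k)) = -1 ∧
        ∀ i : Fin (k + 1), i < Fin.last k →
          (NormedSpace.exp (t • A) * J (Fin.last k)) * J i
            = -(J i * (NormedSpace.exp (t • A) * J (Fin.last k)))) ↔
      (A * J (Fin.last k) = -(J (Fin.last k) * A) ∧
        ∀ i : Fin (k + 1), i < Fin.last k → A * J i = J i * A)) := by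
  let : NormedRing (Matrix (Fin p) (Fin p) ℝ) := Matrix.linftyOpNormedRing
  let : NormedAlgebra ℝ (Matrix (Fin p) (Fin p) ℝ) := Matrix.linftyOpNormedAlgebra
  have hunit : IsUnit (J (Fin.last k)) := isUnit_of_mul_self_eq_neg_one (hcs _)
  calc _ ↔ ∀ t : ℝ, exp (t • A) * J (Fin.last k) * exp (t • A) = J (Fin.last k) ∧
          ∀ i : Fin (k + 1), i < Fin.last k → Commute (exp (t • A)) (J i) :=
        forall_congr' fun t => and_congr (mul_mul_self_eq_neg_one_iff (hcs _) _)
          (forall₂_congr fun i hi => mul_mul_eq_neg_mul_mul_iff_commute hunit (hanti _ _ hi.ne') _)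
    _ ↔ (∀ t : ℝ, exp (t • A) * J (Fin.last k) * exp (t • A) = J (Fin.last k)) ∧
          ∀ i : Fin (k + 1), i < Fin.last k → ∀ t : ℝ, Commute (exp (t • A)) (J i) :=
        forall_and.trans (and_congr_right' ⟨fun h i hi t => h t i hi, fun h t i hi => h i hi t⟩)
    _ ↔ _ := and_congr forall_exp_smul_mul_mul_exp_smul_eq_iff
          (forall₂_congr fun _ _ => forall_exp_smul_commute_iff)

/-- (Paper's Lemma 3.3.)  For a Clifford family `J₁,…,J_j`
(here `j = k+1` and `J_j` is the last member `J (Fin.last k)`) and an arbitrary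
matrix `A`, the curve `t ↦ exp(tA)·J_j` consists of complex structures
anticommuting with `J_i` for all `i < j` if and only if `A` anticommutes with
`J_j` and commutes with all `J_i`, `i < j`. -/
theorem exp_curve_in_centriole_iff (p k : ℕ) (hp : 1 ≤ p)
    (J : Fin (k + 1) → Matrix (Fin p) (Fin p) ℝ)
    (hcs : ∀ i, J i * J i = -1)
    (hanti : ∀ i j, i ≠ j → J i * J j = -(J j * J i))
    (A : Matrix (Fin p) (Fin p) ℝ) :
    ((∀ t : ℝ,
        (NormedSpace.exp (t • A) * J (Fin.last k)) *
          (NormedSpace.exp (t • A) * J (Fin.last k)) = -1 ∧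
        ∀ i : Fin (k + 1), i < Fin.last k →
          (NormedSpace.exp (t • A) * J (Fin.last k)) * J i
            = -(J i * (NormedSpace.exp (t • A) * J (Fin.last k)))) ↔
      (A * J (Fin.last k) = -(J (Fin.last k) * A) ∧
        ∀ i : Fin (k + 1), i < Fin.last k → A * J i = J i * A)) :=
  exp_curve_in_centriole_iff_general p k J hcs hanti A
end

section
/- Define s : ℕ → ℕ by s(0)=1, s(1)=2, s(2)=4, s(3)=4, s(4)=8, s(5)=8, s(6)=8, s(7)=8, and s(n+8) = 16·s(n) for all n. If p ≥ 1, n ≥ 1, and ℝ^p admits a Clifford family J_1,…,J_n, then s(n) divides p. -/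
open Matrix

/-- The dimension `s(n)` of an irreducible real module over the Clifford
algebra `Cl_n` (paper's Theorem 2.3). -/
def cliffordIrredDim : ℕ → ℕ
  | 0 => 1
  | 1 => 2
  | 2 => 4
  | 3 => 4
  | 4 => 8
  | 5 => 8
  | 6 => 8
  | 7 => 8
  | (n + 8) => 16 * cliffordIrredDim n

/-!
Call a family of `a` complex structures and `b` involutions, all pairwise anticommuting, a
Clifford family of signature `(a, b)`. Such families can be rewritten on the same space: if `f`
is one of the involutions, multiplying every other member on the right by `f` turns signature
`(a, b + 1)` into `(b, a + 1)`; if `e₀, e₁, e₂` are complex structures, multiplying every other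
member by `e₀ e₁ e₂` turns `(a + 3, b)` into `(b + 3, a)`. If `e` is a complex structure and `f`
an involution of the family, then `e` swaps the `±1`-eigenspaces of `f`, while the other members
times `e f` commute with `f`; on the `+1`-eigenspace they form a family of signature `(a, b)`
from `(a + 1, b + 1)`, on a space of half the dimension. Chaining these moves takes `(a + 8, b)`
to `(a, b)` at the cost of a factor `16`. For `n < 8` the space is a module over `ℂ` or `ℍ`,
and `n = 4` reduces to `n = 2` by the moves above.
-/

open Module Module.End Function

section Ring

variable {A : Type*} [Ring A]

def AntiCommute (a b : A) : Prop := a * b = -(b * a)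

namespace AntiCommute

variable {a b c : A}

theorem eq (h : AntiCommute a b) : a * b = -(b * a) := h

theorem symm (h : AntiCommute a b) : AntiCommute b a := by
  rw [AntiCommute, h, neg_neg]

theorem mul_right (hab : AntiCommute a b) (hac : Commute a c) : AntiCommute a (b * c) := by
  rw [AntiCommute, ← mul_assoc, hab, neg_mul, mul_assoc, hac.eq, mul_assoc]

theorem commute_mul_right (hab : AntiCommute a b) (hac : AntiCommute a c) :
    Commute a (b * c) := by
  rw [Commute, SemiconjBy, ← mul_assoc, hab, neg_mul, mul_assoc, hac, mul_neg, neg_neg,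
    mul_assoc]

theorem mul_mul_mul_comm (hbc : AntiCommute b c) (a d : A) :
    a * b * (c * d) = -(a * c * (b * d)) := by
  rw [mul_assoc, ← mul_assoc b, hbc]
  simp only [neg_mul, mul_neg, mul_assoc]

theorem mul_right_mul_right (hab : AntiCommute a b) (haw : AntiCommute a c)
    (hbw : AntiCommute b c) : AntiCommute (a * c) (b * c) := by
  rw [AntiCommute, hbw.symm.mul_mul_mul_comm, haw.symm.mul_mul_mul_comm, hab.eq, neg_mul]

theorem mul_right_mul_right_of_commute (hab : AntiCommute a b) (haw : Commute a c)
    (hbw : Commute b c) : AntiCommute (a * c) (b * c) := by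
  rw [AntiCommute, hbw.symm.mul_mul_mul_comm, haw.symm.mul_mul_mul_comm, hab.eq, neg_mul]

end AntiCommute

theorem Commute.antiCommute_mul_right {a b c : A} (hab : Commute a b) (hac : AntiCommute a c) :
    AntiCommute a (b * c) := by
  rw [AntiCommute, ← mul_assoc, hab.eq, mul_assoc, hac, mul_neg, mul_assoc]

structure IsCliffordPair {ι κ : Type*} (J : ι → A) (K : κ → A) : Prop where
  mul_self_left : ∀ i, J i * J i = -1
  mul_self_right : ∀ k, K k * K k = 1
  pairwise_left : Pairwise fun i j => AntiCommute (J i) (J j)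
  pairwise_right : Pairwise fun k l => AntiCommute (K k) (K l)
  antiCommute : ∀ i k, AntiCommute (J i) (K k)

namespace IsCliffordPair

variable {ι κ : Type*} {J : ι → A} {K : κ → A} {w : A}

theorem comp_left (h : IsCliffordPair J K) {ι' : Type*} {e : ι' → ι} (he : Injective e) :
    IsCliffordPair (J ∘ e) K :=
  ⟨fun i => h.mul_self_left (e i), h.mul_self_right, fun _ _ hij => h.pairwise_left (he.ne hij),
    h.pairwise_right, fun i => h.antiCommute (e i)⟩

theorem map {B F : Type*} [Ring B] [FunLike F A B] [RingHomClass F A B] (h : IsCliffordPair J K)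
    (f : F) : IsCliffordPair (f ∘ J) (f ∘ K) where
  mul_self_left i := by simp [← map_mul, h.mul_self_left i]
  mul_self_right k := by simp [← map_mul, h.mul_self_right k]
  pairwise_left i j hij := by
    simp [AntiCommute, ← map_mul, ← map_neg, (h.pairwise_left hij).eq]
  pairwise_right k l hkl := by
    simp [AntiCommute, ← map_mul, ← map_neg, (h.pairwise_right hkl).eq]
  antiCommute i k := by simp [AntiCommute, ← map_mul, ← map_neg, (h.antiCommute i k).eq]

theorem mul_right_of_antiCommute (h : IsCliffordPair J K) (hw : w * w = 1)
    (hJ : ∀ i, AntiCommute (J i) w) (hK : ∀ k, AntiCommute (K k) w) :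
    IsCliffordPair (fun k => K k * w) (fun i => J i * w) where
  mul_self_left k := by rw [(hK k).symm.mul_mul_mul_comm, h.mul_self_right, hw, one_mul]
  mul_self_right i := by
    rw [(hJ i).symm.mul_mul_mul_comm, h.mul_self_left, hw, neg_one_mul, neg_neg]
  pairwise_left k l hkl := (h.pairwise_right hkl).mul_right_mul_right (hK k) (hK l)
  pairwise_right i j hij := (h.pairwise_left hij).mul_right_mul_right (hJ i) (hJ j)
  antiCommute k i := (h.antiCommute i k).symm.mul_right_mul_right (hK k) (hJ i)

theorem mul_right_of_commute (h : IsCliffordPair J K) (hw : w * w = 1)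
    (hJ : ∀ i, Commute (J i) w) (hK : ∀ k, Commute (K k) w) :
    IsCliffordPair (fun i => J i * w) (fun k => K k * w) where
  mul_self_left i := by rw [(hJ i).symm.mul_mul_mul_comm, h.mul_self_left, hw, mul_one]
  mul_self_right k := by rw [(hK k).symm.mul_mul_mul_comm, h.mul_self_right, hw, mul_one]
  pairwise_left i j hij := (h.pairwise_left hij).mul_right_mul_right_of_commute (hJ i) (hJ j)
  pairwise_right k l hkl :=
    (h.pairwise_right hkl).mul_right_mul_right_of_commute (hK k) (hK l)
  antiCommute i k := (h.antiCommute i k).mul_right_mul_right_of_commute (hJ i) (hK k)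

end IsCliffordPair

section Cons

variable {κ : Type*} {n : ℕ}

theorem isCliffordPair_cons_left_iff {e : A} {J : Fin n → A} {K : κ → A} :
    IsCliffordPair (Fin.cons e J : Fin (n + 1) → A) K ↔
      e * e = -1 ∧ (∀ i, AntiCommute e (J i)) ∧ (∀ k, AntiCommute e (K k)) ∧
        IsCliffordPair J K := by
  refine ⟨fun h => ⟨h.mul_self_left 0, fun i => h.pairwise_left (Fin.succ_ne_zero i).symm,
    h.antiCommute 0, h.comp_left (Fin.succ_injective n)⟩, ?_⟩
  rintro ⟨he, heJ, heK, h⟩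
  refine ⟨Fin.cases he h.mul_self_left, h.mul_self_right, ?_, h.pairwise_right,
    Fin.cases heK h.antiCommute⟩
  intro i j hij
  rcases Fin.eq_zero_or_eq_succ i with rfl | ⟨i, rfl⟩ <;>
    rcases Fin.eq_zero_or_eq_succ j with rfl | ⟨j, rfl⟩
  · exact absurd rfl hij
  · exact heJ j
  · exact (heJ i).symm
  · exact h.pairwise_left (Fin.succ_injective n |>.ne_iff.mp hij)

theorem isCliffordPair_cons_right_iff {ι : Type*} {f : A} {J : ι → A} {K : Fin n → A} :
    IsCliffordPair J (Fin.cons f K : Fin (n + 1) → A) ↔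
      f * f = 1 ∧ (∀ i, AntiCommute (J i) f) ∧ (∀ k, AntiCommute f (K k)) ∧
        IsCliffordPair J K := by
  refine ⟨fun h => ⟨h.mul_self_right 0, (h.antiCommute · 0),
    fun k => h.pairwise_right (Fin.succ_ne_zero k).symm, ?_⟩, ?_⟩
  · exact ⟨h.mul_self_left, fun k => h.mul_self_right k.succ, h.pairwise_left,
      fun k l hkl => h.pairwise_right (Fin.succ_injective n |>.ne hkl),
      fun i k => h.antiCommute i k.succ⟩
  rintro ⟨hf, hJf, hfK, h⟩
  refine ⟨h.mul_self_left, Fin.cases hf h.mul_self_right, h.pairwise_left, ?_,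
    fun i => Fin.cases (hJf i) (h.antiCommute i)⟩
  intro k l hkl
  rcases Fin.eq_zero_or_eq_succ k with rfl | ⟨k, rfl⟩ <;>
    rcases Fin.eq_zero_or_eq_succ l with rfl | ⟨l, rfl⟩
  · exact absurd rfl hkl
  · exact hfK l
  · exact (hfK k).symm
  · exact h.pairwise_right (Fin.succ_injective n |>.ne_iff.mp hkl)

variable {m : ℕ}

theorem IsCliffordPair.twist_cons_right {f : A} {J : Fin m → A} {K : Fin n → A}
    (h : IsCliffordPair J (Fin.cons f K : Fin (n + 1) → A)) :
    IsCliffordPair (fun k => K k * f) (Fin.cons f fun i => J i * f : Fin (m + 1) → A) := by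
  obtain ⟨hf, hJf, hfK, h⟩ := isCliffordPair_cons_right_iff.mp h
  exact isCliffordPair_cons_right_iff.mpr ⟨hf, fun k => ((hfK k).mul_right (.refl f)).symm,
    fun i => (hJf i).symm.mul_right (.refl f), h.mul_right_of_antiCommute hf hJf (hfK · |>.symm)⟩

theorem IsCliffordPair.twist_cons₃_left {e₀ e₁ e₂ : A} {J : Fin m → A} {K : Fin n → A}
    (h : IsCliffordPair (Fin.cons e₀ (Fin.cons e₁ (Fin.cons e₂ J)) : Fin (m + 3) → A) K) :
    IsCliffordPair
      (Fin.cons e₀ (Fin.cons e₁ (Fin.cons e₂ fun k => K k * (e₀ * (e₁ * e₂)))) : Fin (n + 3) → A)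
      fun i => J i * (e₀ * (e₁ * e₂)) := by
  obtain ⟨he₀, h₀, h₀K, h⟩ := isCliffordPair_cons_left_iff.mp h
  obtain ⟨he₁, h₁, h₁K, h⟩ := isCliffordPair_cons_left_iff.mp h
  obtain ⟨he₂, h₂J, h₂K, h⟩ := isCliffordPair_cons_left_iff.mp h
  have h₀₁ : AntiCommute e₀ e₁ := h₀ 0
  have h₀₂ : AntiCommute e₀ e₂ := h₀ (Fin.succ 0)
  have h₁₂ : AntiCommute e₁ e₂ := h₁ 0
  set u := e₀ * (e₁ * e₂)
  have h₀u : Commute e₀ u := (Commute.refl e₀).mul_right (h₀₁.commute_mul_right h₀₂)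
  have h₁u : Commute e₁ u :=
    h₀₁.symm.commute_mul_right ((Commute.refl e₁).antiCommute_mul_right h₁₂)
  have h₂u : Commute e₂ u := h₀₂.symm.commute_mul_right (h₁₂.symm.mul_right (.refl e₂))
  have hu : u * u = 1 := by
    rw [(h₀₁.commute_mul_right h₀₂).symm.mul_mul_mul_comm, h₁₂.symm.mul_mul_mul_comm, he₀, he₁,
      he₂]
    norm_num
  have hJu (i : Fin m) : AntiCommute (J i) u :=
    (h₀ i.succ.succ).symm.mul_right ((h₁ i.succ).symm.commute_mul_right (h₂J i).symm)
  have hKu (k : Fin n) : AntiCommute (K k) u :=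
    (h₀K k).symm.mul_right ((h₁K k).symm.commute_mul_right (h₂K k).symm)
  refine isCliffordPair_cons_left_iff.mpr ⟨he₀, Fin.cases h₀₁ <| Fin.cases h₀₂ fun k =>
    (h₀K k).mul_right h₀u, fun i => (h₀ i.succ.succ).mul_right h₀u, ?_⟩
  refine isCliffordPair_cons_left_iff.mpr ⟨he₁, Fin.cases h₁₂ fun k => (h₁K k).mul_right h₁u,
    fun i => (h₁ i.succ).mul_right h₁u, ?_⟩
  exact isCliffordPair_cons_left_iff.mpr ⟨he₂, fun k => (h₂K k).mul_right h₂u,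
    fun i => (h₂J i).mul_right h₂u, h.mul_right_of_antiCommute hu hJu hKu⟩

end Cons

end Ring

section LinearAlgebra

variable {R M : Type*} [AddCommGroup M]

theorem IsCliffordPair.restrict [Ring R] [Module R M] {ι κ : Type*} {J : ι → End R M}
    {K : κ → End R M} (h : IsCliffordPair J K) {p : Submodule R M} (hJ : ∀ i, Set.MapsTo (J i) p p)
    (hK : ∀ k, Set.MapsTo (K k) p p) :
    IsCliffordPair (fun i => (J i).restrict (hJ i)) (fun k => (K k).restrict (hK k)) where
  mul_self_left i := by
    ext v; exact LinearMap.congr_fun (h.mul_self_left i) v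
  mul_self_right k := by
    ext v; exact LinearMap.congr_fun (h.mul_self_right k) v
  pairwise_left i j hij := by
    ext v; exact LinearMap.congr_fun (h.pairwise_left hij).eq v
  pairwise_right k l hkl := by
    ext v; exact LinearMap.congr_fun (h.pairwise_right hkl).eq v
  antiCommute i k := by
    ext v; exact LinearMap.congr_fun (h.antiCommute i k).eq v

theorem AntiCommute.mapsTo_eigenspace_neg [CommRing R] [Module R M] {g T : End R M}
    (h : AntiCommute g T) (μ : R) :
    Set.MapsTo g (eigenspace T μ) (eigenspace T (-μ)) := by
  intro v hv
  rw [SetLike.mem_coe, mem_eigenspace_iff] at hv ⊢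
  have := LinearMap.congr_fun h.eq v
  simp only [Module.End.mul_apply, LinearMap.neg_apply, hv, map_smul] at this
  rw [neg_smul, this, neg_neg]

end LinearAlgebra

section FiniteDimensional

variable {K V : Type*} [Field K] [AddCommGroup V] [Module K V] [FiniteDimensional K V]

theorem finrank_eigenspace_le_finrank_eigenspace_neg {g T : End K V} (hg : Injective g)
    (h : AntiCommute g T) (μ : K) :
    finrank K (eigenspace T μ) ≤ finrank K (eigenspace T (-μ)) :=
  LinearMap.finrank_le_finrank_of_injective (f := g.restrict (h.mapsTo_eigenspace_neg μ))
    fun _ _ hvw => Subtype.ext <| hg <| congrArg Subtype.val hvw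

theorem finrank_eigenspace_one_add_finrank_eigenspace_neg_one [NeZero (2 : K)] {T : End K V}
    (hT : T * T = 1) :
    finrank K (eigenspace T 1) + finrank K (eigenspace T (-1)) = finrank K V := by
  have hTT (v : V) : T (T v) = v := by simpa using LinearMap.congr_fun hT v
  have hrange : LinearMap.range (1 + T) = eigenspace T 1 := by
    ext v
    simp only [LinearMap.mem_range, mem_eigenspace_iff, one_smul, LinearMap.add_apply,
      Module.End.one_apply]
    refine ⟨fun ⟨w, hw⟩ => by rw [← hw, map_add, hTT, add_comm], fun hv => ⟨(2⁻¹ : K) • v, ?_⟩⟩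
    rw [map_smul, hv, ← add_smul, ← two_mul, mul_inv_cancel₀ (two_ne_zero' K), one_smul]
  have hker : LinearMap.ker (1 + T) = eigenspace T (-1) := by
    ext v
    rw [LinearMap.mem_ker, mem_eigenspace_iff, LinearMap.add_apply, Module.End.one_apply,
      neg_one_smul, add_eq_zero_iff_eq_neg', eq_comm]
  rw [← hrange, ← hker, LinearMap.finrank_range_add_finrank_ker]

/-- An injective operator anticommuting with an involution exchanges its `±1`-eigenspaces. -/
theorem finrank_eq_two_mul_finrank_eigenspace [NeZero (2 : K)] {T g : End K V} (hT : T * T = 1)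
    (hg : Injective g) (hgT : AntiCommute g T) :
    finrank K V = 2 * finrank K (eigenspace T 1) := by
  have hle := finrank_eigenspace_le_finrank_eigenspace_neg hg hgT 1
  have hge := finrank_eigenspace_le_finrank_eigenspace_neg hg hgT (-1)
  rw [neg_neg] at hge
  rw [← finrank_eigenspace_one_add_finrank_eigenspace_neg_one hT]
  omega

end FiniteDimensional

theorem finrank_dvd_finrank_of_algHom {K D V : Type*} [Field K] [DivisionRing D] [Algebra K D]
    [AddCommGroup V] [Module K V] (φ : D →ₐ[K] End K V) : finrank K D ∣ finrank K V := by
  let := Module.compHom V φ.toRingHom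
  have : IsScalarTower K D V := ⟨fun r d v => by
    change φ (r • d) v = r • φ d v
    simp⟩
  exact Module.finrank_dvd_finrank_right K D V

def CliffordDimDvd (a b d : ℕ) : Prop :=
  ∀ (V : Type) [AddCommGroup V] [Module ℝ V] [FiniteDimensional ℝ V] (J : Fin a → End ℝ V)
    (K : Fin b → End ℝ V), IsCliffordPair J K → d ∣ finrank ℝ V

namespace CliffordDimDvd

variable {a b d : ℕ}

theorem mono {a' : ℕ} (h : CliffordDimDvd a b d) (ha : a ≤ a') : CliffordDimDvd a' b d :=
  fun V _ _ _ J K hJK => h V (J ∘ Fin.castLE ha) K (hJK.comp_left (Fin.castLE_injective ha))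

theorem swap_succ (h : CliffordDimDvd b (a + 1) d) : CliffordDimDvd a (b + 1) d := by
  intro V _ _ _ J K hJK
  cases K using Fin.consCases
  exact h V _ _ hJK.twist_cons_right

theorem swap_add_three (h : CliffordDimDvd (b + 3) a d) : CliffordDimDvd (a + 3) b d := by
  intro V _ _ _ J K hJK
  cases J using Fin.consCases with | cons e₀ J =>
  cases J using Fin.consCases with | cons e₁ J =>
  cases J using Fin.consCases with | cons e₂ J =>
  exact h V _ _ hJK.twist_cons₃_left


theorem succ_succ (h : CliffordDimDvd a b d) : CliffordDimDvd (a + 1) (b + 1) (2 * d) := by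
  intro V _ _ _ J K hJK
  cases J using Fin.consCases with | cons e J =>
  cases K using Fin.consCases with | cons f K =>
  obtain ⟨he, heJ, heK, hJK⟩ := isCliffordPair_cons_left_iff.mp hJK
  obtain ⟨hf, hJf, hfK, hJK⟩ := isCliffordPair_cons_right_iff.mp hJK
  have hef : AntiCommute e f := heK 0
  have hw : e * f * (e * f) = 1 := by
    rw [hef.symm.mul_mul_mul_comm, he, hf]
    norm_num
  have hfw : AntiCommute f (e * f) := hef.symm.mul_right (.refl f)
  have hfJw (i : Fin a) : Commute f (J i * (e * f)) := (hJf i).symm.commute_mul_right hfw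
  have hfKw (k : Fin b) : Commute f (K k * (e * f)) := (hfK k).commute_mul_right hfw
  have hE := h _ _ _ <| (hJK.mul_right_of_commute hw
      (fun i => (heJ i).symm.commute_mul_right (hJf i))
      (fun k => (heK k.succ).symm.commute_mul_right (hfK k).symm)).restrict
    (fun i => mapsTo_genEigenspace_of_comm (hfJw i) 1 1)
    (fun k => mapsTo_genEigenspace_of_comm (hfKw k) 1 1)
  have he_inj : Injective e :=
    ((isUnit_iff e).mp (IsUnit.of_mul_eq_one (-e) (by rw [mul_neg, he, neg_neg]))).injective
  rw [finrank_eq_two_mul_finrank_eigenspace hf he_inj hef]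
  exact mul_dvd_mul_left 2 hE

theorem add_eight (h : CliffordDimDvd a b d) : CliffordDimDvd (a + 8) b (16 * d) := by
  -- signatures `(a, b) → (a + 1, b + 1) → (b, a + 2) → (b + 3, a + 5) → (a + 8, b)`
  have := h.succ_succ.swap_succ.succ_succ.succ_succ.succ_succ.swap_add_three
  rwa [show 2 * (2 * (2 * (2 * d))) = 16 * d by ring] at this

end CliffordDimDvd

theorem cliffordDimDvd_one_zero_two : CliffordDimDvd 1 0 2 := fun V _ _ _ J _ h => by
  simpa using finrank_dvd_finrank_of_algHom (Complex.lift ⟨J 0, h.mul_self_left 0⟩)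

theorem cliffordDimDvd_two_zero_four : CliffordDimDvd 2 0 4 := fun V _ _ _ J _ h => by
  let q : QuaternionAlgebra.Basis (End ℝ V) (-1 : ℝ) 0 (-1) :=
    { i := J 0, j := J 1, k := J 0 * J 1
      i_mul_i := by simp [h.mul_self_left 0]
      j_mul_j := by simp [h.mul_self_left 1]
      i_mul_j := rfl
      j_mul_i := by simp [(h.pairwise_left (i := 1) (j := 0) (by decide)).eq] }
  have := finrank_dvd_finrank_of_algHom (K := ℝ) (D := Quaternion ℝ) (QuaternionAlgebra.lift q)
  rwa [Quaternion.finrank_eq_four] at this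

theorem cliffordDimDvd_four_zero_eight : CliffordDimDvd 4 0 8 :=
  cliffordDimDvd_two_zero_four.succ_succ.swap_add_three

theorem cliffordDimDvd_cliffordIrredDim : ∀ n, CliffordDimDvd n 0 (cliffordIrredDim n)
  | 0 => fun _ _ _ _ _ _ _ => one_dvd _
  | 1 => cliffordDimDvd_one_zero_two
  | 2 => cliffordDimDvd_two_zero_four
  | 3 => cliffordDimDvd_two_zero_four.mono (by norm_num)
  | 4 => cliffordDimDvd_four_zero_eight
  | 5 => cliffordDimDvd_four_zero_eight.mono (by norm_num)
  | 6 => cliffordDimDvd_four_zero_eight.mono (by norm_num)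
  | 7 => cliffordDimDvd_four_zero_eight.mono (by norm_num)
  | n + 8 => (cliffordDimDvd_cliffordIrredDim n).add_eight

theorem cliffordIrredDim_dvd_of_clifford_family_general (p n : ℕ)
    (J : Fin n → Matrix (Fin p) (Fin p) ℝ)
    (hcs : ∀ i, J i * J i = -1)
    (hanti : ∀ i j, i ≠ j → J i * J j = -(J j * J i)) :
    cliffordIrredDim n ∣ p := by
  have hJ : IsCliffordPair J (Fin.elim0 : Fin 0 → Matrix (Fin p) (Fin p) ℝ) :=
    ⟨hcs, fun k => k.elim0, fun i j => hanti i j, fun k => k.elim0, fun _ k => k.elim0⟩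
  simpa using cliffordDimDvd_cliffordIrredDim n _ _ _ (hJ.map Matrix.toLinAlgEquiv')

/-- If `ℝ^p` admits a Clifford family `J₁,…,Jₙ`, then
`s(n)` divides `p`. -/
theorem cliffordIrredDim_dvd_of_clifford_family (p n : ℕ) (hp : 1 ≤ p) (hn : 1 ≤ n)
    (J : Fin n → Matrix (Fin p) (Fin p) ℝ)
    (hcs : ∀ i, J i * J i = -1)
    (hanti : ∀ i j, i ≠ j → J i * J j = -(J j * J i)) :
    cliffordIrredDim n ∣ p :=
  cliffordIrredDim_dvd_of_clifford_family_general p n J hcs hanti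
end

section
/- Let p ≥ 1, ℓ ≥ 1, and let J_1,…,J_ℓ be a Clifford family on ℝ^p. (a) If A is a real p×p matrix with A·A = −I that commutes with J_i for all i < ℓ and anticommutes with J_ℓ, then J := A·J_ℓ is a complex structure that anticommutes with each of J_1,…,J_ℓ. (b) Conversely, if J is a complex structure on ℝ^p anticommuting with each of J_1,…,J_ℓ, then A := −J·J_ℓ satisfies A·A = −I, A commutes with J_i for all i < ℓ, A anticommutes with J_ℓ, and A·J_ℓ = J; moreover, if in addition J and J_ℓ are orthogonal matrices, then Aᵀ = −A. -/
open Matrix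

/-- (Algebraic correspondence in the proof of the paper's
Theorem 3.1.)  Here the Clifford family is `J 0, …, J (Fin.last k)`
(so `ℓ = k + 1 ≥ 1` members, the last one playing the role of `J_ℓ`).

(a) If `A² = −I`, `A` commutes with `J i` for `i < Fin.last k` and anticommutes
with `J (Fin.last k)`, then `A·J (Fin.last k)` is a complex structure
anticommuting with every member of the family.

(b) Conversely, if `K` is a complex structure anticommuting with every member
of the family, then `A := −K·J (Fin.last k)` squares to `−I`, commutes with
`J i` for `i < Fin.last k`, anticommutes with `J (Fin.last k)`, satisfies
`A·J (Fin.last k) = K`, and is skew-symmetric provided `K` and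
`J (Fin.last k)` are orthogonal. -/
theorem complex_structure_extension_correspondence (p k : ℕ) (hp : 1 ≤ p)
    (J : Fin (k + 1) → Matrix (Fin p) (Fin p) ℝ)
    (hcs : ∀ i, J i * J i = -1)
    (hanti : ∀ i j, i ≠ j → J i * J j = -(J j * J i)) :
    (∀ A : Matrix (Fin p) (Fin p) ℝ, A * A = -1 →
      (∀ i : Fin (k + 1), i < Fin.last k → A * J i = J i * A) →
      A * J (Fin.last k) = -(J (Fin.last k) * A) →
      (A * J (Fin.last k)) * (A * J (Fin.last k)) = -1 ∧
      ∀ i : Fin (k + 1),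
        (A * J (Fin.last k)) * J i = -(J i * (A * J (Fin.last k)))) ∧
    (∀ K : Matrix (Fin p) (Fin p) ℝ, K * K = -1 →
      (∀ i : Fin (k + 1), K * J i = -(J i * K)) →
      (-(K * J (Fin.last k))) * (-(K * J (Fin.last k))) = -1 ∧
      (∀ i : Fin (k + 1), i < Fin.last k →
        (-(K * J (Fin.last k))) * J i = J i * (-(K * J (Fin.last k)))) ∧
      (-(K * J (Fin.last k))) * J (Fin.last k)
        = -(J (Fin.last k) * (-(K * J (Fin.last k)))) ∧
      (-(K * J (Fin.last k))) * J (Fin.last k) = K ∧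
      (Kᵀ * K = 1 → (J (Fin.last k))ᵀ * J (Fin.last k) = 1 →
        (-(K * J (Fin.last k)))ᵀ = -(-(K * J (Fin.last k))))) := by

  have hLL : J (Fin.last k) * J (Fin.last k) = -1 := hcs _
  constructor
  · intro A hA2 hcomm hAL
    have hLA : J (Fin.last k) * A = -(A * J (Fin.last k)) := by rw [hAL, neg_neg]
    constructor
    · calc A * J (Fin.last k) * (A * J (Fin.last k))
          = A * (J (Fin.last k) * A) * J (Fin.last k) := by noncomm_ring
        _ = A * (-(A * J (Fin.last k))) * J (Fin.last k) := by rw [hLA]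
        _ = -(A * A * (J (Fin.last k) * J (Fin.last k))) := by noncomm_ring
        _ = -((-1 : Matrix (Fin p) (Fin p) ℝ) * (-1)) := by rw [hA2, hLL]
        _ = -1 := by noncomm_ring
    · intro i
      rcases eq_or_ne i (Fin.last k) with h | h
      · subst h
        calc A * J (Fin.last k) * J (Fin.last k)
            = A * (J (Fin.last k) * J (Fin.last k)) := by noncomm_ring
          _ = -A := by rw [hLL]; noncomm_ring
          _ = -(J (Fin.last k) * (A * J (Fin.last k))) := by
              rw [← mul_assoc, hLA]
              noncomm_ring [hLL]
      · have hiL : J i * J (Fin.last k) = -(J (Fin.last k) * J i) := hanti i _ h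
        have hc : A * J i = J i * A := hcomm i (lt_of_le_of_ne (Fin.le_last i) h)
        calc A * J (Fin.last k) * J i
            = A * (J (Fin.last k) * J i) := by noncomm_ring
          _ = A * (-(J i * J (Fin.last k))) := by rw [← neg_neg (J (Fin.last k) * J i), ← hiL]
          _ = -(A * J i * J (Fin.last k)) := by noncomm_ring
          _ = -(J i * A * J (Fin.last k)) := by rw [hc]
          _ = -(J i * (A * J (Fin.last k))) := by noncomm_ring
  · intro K hK2 hKanti
    have hKL : K * J (Fin.last k) = -(J (Fin.last k) * K) := hKanti _
    have hLK : J (Fin.last k) * K = -(K * J (Fin.last k)) := by rw [hKL, neg_neg]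
    refine ⟨?_, ?_, ?_, ?_, ?_⟩
    · calc -(K * J (Fin.last k)) * -(K * J (Fin.last k))
          = K * (J (Fin.last k) * K) * J (Fin.last k) := by noncomm_ring
        _ = K * (-(K * J (Fin.last k))) * J (Fin.last k) := by rw [hLK]
        _ = -(K * K * (J (Fin.last k) * J (Fin.last k))) := by noncomm_ring
        _ = -((-1 : Matrix (Fin p) (Fin p) ℝ) * (-1)) := by rw [hK2, hLL]
        _ = -1 := by noncomm_ring
    · intro i hi
      have h : i ≠ Fin.last k := ne_of_lt hi
      have hLi : J (Fin.last k) * J i = -(J i * J (Fin.last k)) := hanti _ i (Ne.symm h)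
      have hKi : K * J i = -(J i * K) := hKanti i
      calc -(K * J (Fin.last k)) * J i
          = -(K * (J (Fin.last k) * J i)) := by noncomm_ring
        _ = -(K * (-(J i * J (Fin.last k)))) := by rw [hLi]
        _ = K * J i * J (Fin.last k) := by noncomm_ring
        _ = -(J i * K) * J (Fin.last k) := by rw [hKi]
        _ = J i * (-(K * J (Fin.last k))) := by noncomm_ring
    · calc -(K * J (Fin.last k)) * J (Fin.last k)
          = -(K * (J (Fin.last k) * J (Fin.last k))) := by noncomm_ring
        _ = K := by rw [hLL]; noncomm_ring
        _ = -(J (Fin.last k) * -(K * J (Fin.last k))) := by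
            rw [mul_neg, ← mul_assoc, hLK]
            noncomm_ring [hLL]
    · calc -(K * J (Fin.last k)) * J (Fin.last k)
          = -(K * (J (Fin.last k) * J (Fin.last k))) := by noncomm_ring
        _ = K := by rw [hLL]; noncomm_ring
    · intro hKo hLo
      have hKt : Kᵀ = -K := by
        calc Kᵀ = Kᵀ * (-(K * K)) := by rw [hK2]; noncomm_ring
          _ = -(Kᵀ * K * K) := by noncomm_ring
          _ = -K := by rw [hKo]; noncomm_ring
      have hLt : (J (Fin.last k))ᵀ = -(J (Fin.last k)) := by
        calc (J (Fin.last k))ᵀ = (J (Fin.last k))ᵀ * (-(J (Fin.last k) * J (Fin.last k))) := by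
              rw [hLL]; noncomm_ring
          _ = -((J (Fin.last k))ᵀ * J (Fin.last k) * J (Fin.last k)) := by noncomm_ring
          _ = -(J (Fin.last k)) := by rw [hLo]; noncomm_ring
      rw [transpose_neg, transpose_mul, hKt, hLt, neg_neg,
        show -(J (Fin.last k)) * -K = J (Fin.last k) * K from by noncomm_ring, hLK, neg_neg]
end

section
/- Let d be a positive integer, p ≥ 1, and let k_1,…,k_p be odd integers such that p − |Σ_{i=1}^p k_i| ≥ 2d. If |k_i| ≥ 3 for some i, then Σ_{(i,j) : k_i > k_j} (k_i − k_j − 2) > d, where the sum runs over all ordered pairs (i,j) with 1 ≤ i, j ≤ p and k_i > k_j. -/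
lemma index_estimate_aux (d : ℕ) (p : ℕ) (k : Fin p → ℤ) (hodd : ∀ i, Odd (k i))
    (hbound : 2 * (d : ℤ) ≤ (p : ℤ) - |∑ i, k i|)
    (a : Fin p) (ha : 3 ≤ k a) :
    (d : ℤ) <
      ∑ ij ∈ Finset.univ.filter (fun ij : Fin p × Fin p => k ij.2 < k ij.1),
        (k ij.1 - k ij.2 - 2) := by
  classical
  set P := Finset.univ.filter (fun j : Fin p => 0 < k j) with hP
  set N := Finset.univ.filter (fun j : Fin p => k j < 0) with hN
  have hne : ∀ j, k j ≠ 0 := by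
    intro j h
    have := hodd j
    rw [h] at this
    exact (Int.not_even_iff_odd.mpr this) Even.zero
  have hNs : N = Finset.univ.filter (fun j : Fin p => ¬ 0 < k j) := by
    ext j
    simp only [hN, Finset.mem_filter, Finset.mem_univ, true_and]
    have := hne j
    omega
  have hsplit : ∑ j ∈ P, k j + ∑ j ∈ N, k j = ∑ j, k j := by
    rw [hNs, hP]
    exact Finset.sum_filter_add_sum_filter_not _ _ _
  have hcard : P.card + N.card = p := by
    rw [hNs, hP, Finset.card_filter_add_card_filter_not]
    simp
  have haP : a ∈ P := by
    simp only [hP, Finset.mem_filter, Finset.mem_univ, true_and]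
    omega
  have hPsum : (P.card : ℤ) + 2 ≤ ∑ j ∈ P, k j := by
    have herase : ∑ j ∈ P.erase a, k j + k a = ∑ j ∈ P, k j :=
      Finset.sum_erase_add P k haP
    have h1 : ∀ j ∈ P.erase a, (1:ℤ) ≤ k j := by
      intro j hj
      have hj' : j ∈ P := Finset.mem_of_mem_erase hj
      simp only [hP, Finset.mem_filter, Finset.mem_univ, true_and] at hj'
      omega
    have h2 : ((P.erase a).card : ℤ) * 1 ≤ ∑ j ∈ P.erase a, k j := by
      simpa using Finset.card_nsmul_le_sum (P.erase a) k 1 h1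
    have h3 : (P.erase a).card = P.card - 1 := Finset.card_erase_of_mem haP
    have h4 : 1 ≤ P.card := Finset.card_pos.mpr ⟨a, haP⟩
    have h5 : ((P.erase a).card : ℤ) = (P.card : ℤ) - 1 := by
      rw [h3]; omega
    rw [h5] at h2
    linarith
  have hsumle : ∑ i, k i ≤ (p:ℤ) - 2*d := by
    have := le_abs_self (∑ i, k i)
    linarith
  have hcardZ : (P.card : ℤ) + (N.card : ℤ) = (p : ℤ) := by exact_mod_cast hcard
  have hNsum : ∑ j ∈ N, k j ≤ (N.card : ℤ) - 2*d - 2 := by linarith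
  -- the partial sum over pairs (a, j) with k j < 0
  have hpart : 2*(d:ℤ) + 2 ≤ ∑ j ∈ N, (k a - k j - 2) := by
    have h1 : ∑ j ∈ N, ((1:ℤ) - k j) ≤ ∑ j ∈ N, (k a - k j - 2) := by
      apply Finset.sum_le_sum
      intro j _
      linarith
    have h2 : ∑ j ∈ N, ((1:ℤ) - k j) = (N.card : ℤ) - ∑ j ∈ N, k j := by
      rw [Finset.sum_sub_distrib]
      simp [mul_comm]
    linarith
  set S := Finset.univ.filter (fun ij : Fin p × Fin p => k ij.2 < k ij.1) with hS
  set T := N.image (fun j => (a, j)) with hT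
  have hTsum : ∑ ij ∈ T, (k ij.1 - k ij.2 - 2) = ∑ j ∈ N, (k a - k j - 2) := by
    rw [hT, Finset.sum_image (fun x _ y _ h => by simpa using h : ∀ x ∈ N, ∀ y ∈ N, (a, x) = (a, y) → x = y)]
  have hTS : T ⊆ S := by
    intro ij hij
    rw [hT, Finset.mem_image] at hij
    obtain ⟨j, hj, rfl⟩ := hij
    simp only [hN, Finset.mem_filter, Finset.mem_univ, true_and] at hj
    simp only [hS, Finset.mem_filter, Finset.mem_univ, true_and]
    omega
  have hterm : ∀ ij ∈ S, (0:ℤ) ≤ k ij.1 - k ij.2 - 2 := by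
    intro ij hij
    simp only [hS, Finset.mem_filter, Finset.mem_univ, true_and] at hij
    have he : Even (k ij.1 - k ij.2) := (hodd ij.1).sub_odd (hodd ij.2)
    obtain ⟨c, hc⟩ := he
    omega
  have hmain : ∑ ij ∈ T, (k ij.1 - k ij.2 - 2) ≤ ∑ ij ∈ S, (k ij.1 - k ij.2 - 2) :=
    Finset.sum_le_sum_of_subset_of_nonneg hTS (fun ij hij _ => hterm ij hij)
  have hd0 : (0:ℤ) ≤ (d:ℤ) := Int.natCast_nonneg d
  linarith [hTsum ▸ hmain]

/-- (Arithmetic core of the paper's Proposition 5.2, the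
index estimate for non-minimal geodesics in `U_p`.)  If `k₁,…,k_p` are odd
integers with `p − |Σ kᵢ| ≥ 2d` and `|kᵢ| ≥ 3` for some `i`, then
`Σ_{kᵢ > kⱼ} (kᵢ − kⱼ − 2) > d`. -/
theorem index_estimate_arithmetic (d : ℕ) (hd : 1 ≤ d) (p : ℕ) (hp : 1 ≤ p)
    (k : Fin p → ℤ) (hodd : ∀ i, Odd (k i))
    (hbound : 2 * (d : ℤ) ≤ (p : ℤ) - |∑ i, k i|)
    (hbig : ∃ i, 3 ≤ |k i|) :
    (d : ℤ) <
      ∑ ij ∈ Finset.univ.filter (fun ij : Fin p × Fin p => k ij.2 < k ij.1),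
        (k ij.1 - k ij.2 - 2) := by
  classical
  obtain ⟨a, ha⟩ := hbig
  rcases le_abs.mp ha with h | h
  · exact index_estimate_aux d p k hodd hbound a h
  · have hodd' : ∀ i, Odd (-k i) := fun i => (hodd i).neg
    have hbound' : 2 * (d : ℤ) ≤ (p : ℤ) - |∑ i, -k i| := by
      rw [Finset.sum_neg_distrib, abs_neg]; exact hbound
    have H := index_estimate_aux d p (fun j => -k j) hodd' hbound' a h
    have heq :
        ∑ ij ∈ Finset.univ.filter (fun ij : Fin p × Fin p => -k ij.2 < -k ij.1),
          (-k ij.1 - -k ij.2 - 2) =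
        ∑ ij ∈ Finset.univ.filter (fun ij : Fin p × Fin p => k ij.2 < k ij.1),
          (k ij.1 - k ij.2 - 2) := by
      apply Finset.sum_equiv (Equiv.prodComm (Fin p) (Fin p))
      · intro ij
        simp only [Finset.mem_filter, Finset.mem_univ, true_and, Equiv.prodComm_apply,
          Prod.fst_swap, Prod.snd_swap]
        omega
      · intro ij _
        simp only [Equiv.prodComm_apply, Prod.fst_swap, Prod.snd_swap]
        ring
    simp only [heq] at H
    exact H
end
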